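/- arXiv:2202.12876 — 2 statements merged into one kernel-verified Lean document; each statement's English description precedes it below -/
import Mathlib

section
/- Claim 4.3 in the case of a nontrivial Weyl reflection: Suppose χ ∈ M satisfies ⟨λ', χ − θ⟩ ≤ 0, r_χ ≥ 1/2, and Q < ⟨λ_0, χ − θ⟩ ≤ η_0/2. Let S ⊆ {1, …, n} be nonempty with ⟨λ', β_i⟩ > 0 for all i ∈ S, and set μ := χ + ∑_{i∈S} β_i. If ⟨λ', μ + ρ⟩ ≠ 0, so that μ⁺ is defined, then |⟨λ_0, μ⁺ − θ⟩| ≤ η_0/2 and r_{μ⁺} ≤ r_χ, with strict inequality r_{μ⁺} < r_χ whenever r_χ > 1/2. -/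
/-!
Write `a = ⟨λ', χ⟩ ≤ 0` and `s = ∑_{i ∈ S} ⟨λ', β_i⟩ ∈ (0, D]`. Since `⟨λ', θ⟩ = 0` and
`⟨λ', ρ⟩ = -1`, `r_ν = (|⟨λ', ν⟩| + 1) / D`, so `r_χ ≥ 1/2` says `D ≤ 2 (1 - a)`.
The reflection fixes the `λ₀`-pairing and makes `μ⁺` dominant: `⟨λ', μ⁺ + ρ⟩ = -|⟨λ', μ + ρ⟩|`.
As `m = ⟨λ', μ⟩ = a + s` is an integer different from `1`, this gives `r_{μ⁺} = |m - 1| / D`,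
and either `m ≤ 0`, where `|m - 1| = 1 - a - s < 1 - a`, or `m ≥ 2`, where
`|m - 1| ≤ a + D - 1 ≤ 1 - a`, strictly if `r_χ > 1/2`.
For the `λ₀`-bound, `⟨λ₀, μ⁺ - θ⟩ = ⟨λ₀, χ - θ⟩ + ∑_{i ∈ S} ⟨λ₀, β_i⟩`; the sum is negative and
at least the sum over all `i` with `⟨λ', β_i⟩ ≥ 0`, which the bound `Q < ⟨λ₀, χ - θ⟩` compensates.
-/

noncomputable section

/-- The standard pairing between `N_ℝ = ℝ²` and `M_ℝ = ℝ²`. -/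
def pairR (lam chi : Fin 2 → ℝ) : ℝ := ∑ k, lam k * chi k

/-- `D := −∑_{i : ⟨λ', β_i⟩ ≤ 0} ⟨λ', β_i⟩`. -/
def Dval {n : ℕ} (β : Fin n → Fin 2 → ℝ) (lam' : Fin 2 → ℝ) : ℝ :=
  -∑ i ∈ Finset.univ.filter (fun i => pairR lam' (β i) ≤ 0), pairR lam' (β i)

/-- `Q := η_0/2 + ∑_{i : ⟨λ', β_i⟩ < 0} ⟨λ_0, β_i⟩`, where `η_0 = −∑_i ⟨λ_0, β_i⟩`. -/
def Qval {n : ℕ} (β : Fin n → Fin 2 → ℝ) (lam0 lam' : Fin 2 → ℝ) : ℝ :=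
  (-∑ i, pairR lam0 (β i)) / 2 +
    ∑ i ∈ Finset.univ.filter (fun i => pairR lam' (β i) < 0), pairR lam0 (β i)

/-- The shifted window width: `r_nu := (|pair lam' (nu - theta)| - pair lam' rho) / D`. -/
def rvalRho {n : ℕ} (β : Fin n → Fin 2 → ℝ) (lam' ρ θ ν : Fin 2 → ℝ) : ℝ :=
  (|pairR lam' (ν - θ)| - pairR lam' ρ) / Dval β lam'

/-- The dominant representative `μ⁺` for the ρ-shifted action of the Weyl group `{1, w₀}`:
`μ⁺ = μ` if `pair lam' (μ + ρ) < 0`, and `μ⁺ = w₀(μ + ρ) − ρ` if `pair lam' (μ + ρ) > 0`. -/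
def muPlus (lam' ρ : Fin 2 → ℝ) (w0 : (Fin 2 → ℝ) →ₗ[ℝ] (Fin 2 → ℝ))
    (μ : Fin 2 → ℝ) : Fin 2 → ℝ :=
  if pairR lam' (μ + ρ) < 0 then μ else w0 (μ + ρ) - ρ

@[simp] lemma pairR_add (l a b : Fin 2 → ℝ) : pairR l (a + b) = pairR l a + pairR l b :=
  dotProduct_add l a b

@[simp] lemma pairR_sub (l a b : Fin 2 → ℝ) : pairR l (a - b) = pairR l a - pairR l b :=
  dotProduct_sub l a b

@[simp] lemma pairR_smul (l : Fin 2 → ℝ) (c : ℝ) (a : Fin 2 → ℝ) :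
    pairR l (c • a) = c * pairR l a :=
  dotProduct_smul c l a

@[simp] lemma pairR_sum {ι : Type*} (l : Fin 2 → ℝ) (s : Finset ι) (f : ι → Fin 2 → ℝ) :
    pairR l (∑ i ∈ s, f i) = ∑ i ∈ s, pairR l (f i) :=
  dotProduct_sum l s f

def intLattice : AddSubgroup (Fin 2 → ℝ) := ((Int.castAddHom ℝ).compLeft (Fin 2)).range

lemma mem_intLattice {v : Fin 2 → ℝ} :
    v ∈ intLattice ↔ ∃ c : Fin 2 → ℤ, v = fun k => (c k : ℝ) := by
  simp only [intLattice, AddMonoidHom.mem_range, eq_comm (a := v)]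
  rfl

lemma exists_int_pairR_eq_of_mem_intLattice {lam' : Fin 2 → ℝ}
    (hlam' : ∀ c : Fin 2 → ℤ, ∃ z : ℤ, pairR lam' (fun k => (c k : ℝ)) = z) {v : Fin 2 → ℝ}
    (hv : v ∈ intLattice) : ∃ z : ℤ, pairR lam' v = z := by
  obtain ⟨c, rfl⟩ := mem_intLattice.1 hv
  exact hlam' c

section Window

variable {n : ℕ} {β : Fin n → Fin 2 → ℝ} {lam0 lam' : Fin 2 → ℝ}

lemma Dval_nonneg : 0 ≤ Dval β lam' :=
  neg_nonneg.2 <| Finset.sum_nonpos fun _ hi => (Finset.mem_filter.1 hi).2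

-- If `D = 0`, every `r_ν` is the junk value `x / 0 = 0`.
lemma Dval_pos_of_half_le_rvalRho {ρ θ ν : Fin 2 → ℝ} (h : 1 / 2 ≤ rvalRho β lam' ρ θ ν) :
    0 < Dval β lam' := by
  refine Dval_nonneg.lt_of_ne fun h0 => ?_
  rw [rvalRho, ← h0, div_zero] at h
  norm_num at h

lemma Dval_eq_sum_pos (h : ∑ i, pairR lam' (β i) = 0) :
    Dval β lam' = ∑ i ∈ Finset.univ.filter (fun i => 0 < pairR lam' (β i)), pairR lam' (β i) := by
  have hsplit := Finset.sum_filter_add_sum_filter_not Finset.univ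
    (fun i => pairR lam' (β i) ≤ 0) (fun i => pairR lam' (β i))
  simp only [not_le] at hsplit
  rw [Dval]
  linarith

lemma sum_le_Dval (h : ∑ i, pairR lam' (β i) = 0) {S : Finset (Fin n)}
    (hS : ∀ i ∈ S, 0 < pairR lam' (β i)) : ∑ i ∈ S, pairR lam' (β i) ≤ Dval β lam' := by
  rw [Dval_eq_sum_pos h]
  exact Finset.sum_le_sum_of_subset_of_nonneg (fun i hi => by simpa using hS i hi)
    fun i hi _ => (Finset.mem_filter.1 hi).2.le

lemma abs_add_sum_le_of_Qval_lt (hlam0 : ∀ i, pairR lam0 (β i) < 0) {S : Finset (Fin n)}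
    (hS : ∀ i ∈ S, 0 < pairR lam' (β i)) {t : ℝ} (hQ : Qval β lam0 lam' < t)
    (ht : t ≤ (-∑ i, pairR lam0 (β i)) / 2) :
    |t + ∑ i ∈ S, pairR lam0 (β i)| ≤ (-∑ i, pairR lam0 (β i)) / 2 := by
  set P := Finset.univ.filter (fun i => ¬ pairR lam' (β i) < 0)
  have hSP : S ⊆ P := fun i hi => by simpa [P] using (hS i hi).le
  have hS_nonpos : ∑ i ∈ S, pairR lam0 (β i) ≤ 0 := Finset.sum_nonpos fun i _ => (hlam0 i).le
  have hP_le : ∑ i ∈ P \ S, pairR lam0 (β i) ≤ 0 := Finset.sum_nonpos fun i _ => (hlam0 i).le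
  have hP := Finset.sum_sdiff hSP (f := fun i => pairR lam0 (β i))
  have hsplit := Finset.sum_filter_add_sum_filter_not Finset.univ
    (fun i => pairR lam' (β i) < 0) (fun i => pairR lam0 (β i))
  rw [Qval] at hQ
  rw [abs_le]
  constructor <;> linarith

end Window

section Weyl

variable {lam' ρ : Fin 2 → ℝ} {w0 : (Fin 2 → ℝ) →ₗ[ℝ] (Fin 2 → ℝ)}

lemma pairR_muPlus_of_invariant {l : Fin 2 → ℝ} (hw0 : ∀ ν, pairR l (w0 ν) = pairR l ν)
    (μ : Fin 2 → ℝ) : pairR l (muPlus lam' ρ w0 μ) = pairR l μ := by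
  unfold muPlus
  split_ifs
  · rfl
  · rw [pairR_sub, hw0, pairR_add, add_sub_cancel_right]

lemma pairR_muPlus_add_rho (hw0 : ∀ ν, pairR lam' (w0 ν) = -pairR lam' ν) (μ : Fin 2 → ℝ) :
    pairR lam' (muPlus lam' ρ w0 μ + ρ) = -|pairR lam' (μ + ρ)| := by
  unfold muPlus
  split_ifs with h
  · rw [abs_of_neg h, neg_neg]
  · rw [sub_add_cancel, hw0, abs_of_nonneg (not_lt.1 h)]

lemma rvalRho_eq {n : ℕ} {β : Fin n → Fin 2 → ℝ} {θ : Fin 2 → ℝ} (hθ : pairR lam' θ = 0)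
    (hρ : pairR lam' ρ = -1) (ν : Fin 2 → ℝ) :
    rvalRho β lam' ρ θ ν = (|pairR lam' ν| + 1) / Dval β lam' := by
  rw [rvalRho, pairR_sub, hθ, sub_zero, hρ, sub_neg_eq_add]

lemma rvalRho_muPlus {n : ℕ} {β : Fin n → Fin 2 → ℝ} {θ : Fin 2 → ℝ} (hθ : pairR lam' θ = 0)
    (hρ : pairR lam' ρ = -1) (hw0 : ∀ ν, pairR lam' (w0 ν) = -pairR lam' ν) {μ : Fin 2 → ℝ}
    (h1 : 1 ≤ |pairR lam' (μ + ρ)|) :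
    rvalRho β lam' ρ θ (muPlus lam' ρ w0 μ) = |pairR lam' (μ + ρ)| / Dval β lam' := by
  have hdom := pairR_muPlus_add_rho (ρ := ρ) hw0 μ
  rw [pairR_add, hρ] at hdom
  rw [rvalRho_eq hθ hρ, abs_of_nonpos (by linarith)]
  congr 1
  linarith

end Weyl

lemma one_le_abs_intCast_sub_one {m : ℤ} (hm1 : m ≠ 1) : 1 ≤ |(m : ℝ) - 1| := by
  exact_mod_cast Int.one_le_abs (sub_ne_zero.2 hm1)

lemma abs_intCast_sub_one_le_max {m : ℤ} {a s D : ℝ} (hm1 : m ≠ 1) (hm : (m : ℝ) = a + s)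
    (hsD : s ≤ D) : |(m : ℝ) - 1| ≤ max (1 - (m : ℝ)) (a + D - 1) := by
  rcases (by omega : m ≤ 0 ∨ 2 ≤ m) with h | h
  · have h' : (m : ℝ) ≤ 0 := by exact_mod_cast h
    rw [abs_of_nonpos (by linarith)]
    exact le_max_of_le_left (by linarith)
  · have h' : (2 : ℝ) ≤ m := by exact_mod_cast h
    rw [abs_of_nonneg (by linarith)]
    exact le_max_of_le_right (by linarith)

theorem claim_4_3_weyl_general {n : ℕ}
    (β : Fin n → Fin 2 → ℝ)
    (hβint : ∀ i, ∃ b : Fin 2 → ℤ, β i = fun k => ((b k : ℝ)))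
    (lam0 : Fin 2 → ℝ) (hlam0 : ∀ i, pairR lam0 (β i) < 0)
    (lam' : Fin 2 → ℝ)
    (hlam'ω : pairR lam' (∑ i, β i) = 0)
    (hlam'int : ∀ c : Fin 2 → ℤ, ∃ z : ℤ, pairR lam' (fun k => ((c k : ℝ))) = (z : ℝ))
    (ρ : Fin 2 → ℝ)
    (hρ' : pairR lam' ρ = -1)
    (w0 : (Fin 2 → ℝ) →ₗ[ℝ] (Fin 2 → ℝ))
    (hw0lam0 : ∀ ν, pairR lam0 (w0 ν) = pairR lam0 ν)
    (hw0lam' : ∀ ν, pairR lam' (w0 ν) = -pairR lam' ν)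
    (θ : Fin 2 → ℝ) (hθ : ∃ c : ℝ, θ = c • (∑ i, β i))
    (χ : Fin 2 → ℝ) (hχM : ∃ c : Fin 2 → ℤ, χ = fun k => ((c k : ℝ)))
    (hχ1 : pairR lam' (χ - θ) ≤ 0)
    (hχ2 : 1 / 2 ≤ rvalRho β lam' ρ θ χ)
    (hχ3 : Qval β lam0 lam' < pairR lam0 (χ - θ))
    (hχ4 : pairR lam0 (χ - θ) ≤ (-∑ i, pairR lam0 (β i)) / 2)
    (S : Finset (Fin n)) (hS : S.Nonempty)
    (hSpos : ∀ i ∈ S, 0 < pairR lam' (β i))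
    (μ : Fin 2 → ℝ) (hμ : μ = χ + ∑ i ∈ S, β i)
    (hμplus : pairR lam' (μ + ρ) ≠ 0) :
    |pairR lam0 (muPlus lam' ρ w0 μ - θ)| ≤ (-∑ i, pairR lam0 (β i)) / 2 ∧
      rvalRho β lam' ρ θ (muPlus lam' ρ w0 μ) ≤ rvalRho β lam' ρ θ χ ∧
      (1 / 2 < rvalRho β lam' ρ θ χ →
        rvalRho β lam' ρ θ (muPlus lam' ρ w0 μ) < rvalRho β lam' ρ θ χ) := by
  have hθ' : pairR lam' θ = 0 := by
    obtain ⟨c, rfl⟩ := hθ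
    simp [hlam'ω]
  have hD := Dval_pos_of_half_le_rvalRho hχ2
  set a := pairR lam' χ
  have ha : a ≤ 0 := by simpa [hθ'] using hχ1
  have hDa : Dval β lam' ≤ 2 * (1 - a) := by
    rw [rvalRho_eq hθ' hρ', abs_of_nonpos ha, le_div_iff₀ hD] at hχ2
    linarith
  set s := ∑ i ∈ S, pairR lam' (β i)
  have hs : 0 < s := Finset.sum_pos hSpos hS
  have hsD : s ≤ Dval β lam' := sum_le_Dval (by simpa using hlam'ω) hSpos
  obtain ⟨m, hm⟩ := exists_int_pairR_eq_of_mem_intLattice hlam'int (hμ ▸ add_mem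
    (mem_intLattice.2 hχM) (sum_mem fun i _ => mem_intLattice.2 (hβint i)))
  have hma : (m : ℝ) = a + s := by rw [← hm, hμ, pairR_add, pairR_sum]
  have hμρ : pairR lam' (μ + ρ) = m - 1 := by rw [pairR_add, hm, hρ']; ring
  have hm1 : m ≠ 1 := by rintro rfl; exact hμplus (by rw [hμρ]; norm_num)
  have hbound := abs_intCast_sub_one_le_max hm1 hma hsD
  rw [rvalRho_eq hθ' hρ' χ, abs_of_nonpos ha,
    rvalRho_muPlus hθ' hρ' hw0lam' (hμρ ▸ one_le_abs_intCast_sub_one hm1), hμρ]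
  refine ⟨?_, ?_, fun h => ?_⟩
  · rw [pairR_sub, pairR_muPlus_of_invariant hw0lam0, ← pairR_sub, hμ, add_sub_right_comm,
      pairR_add, pairR_sum]
    exact abs_add_sum_le_of_Qval_lt hlam0 hSpos hχ3 hχ4
  · gcongr
    exact hbound.trans (max_le (by linarith) (by linarith))
  · rw [lt_div_iff₀ hD] at h
    gcongr
    exact hbound.trans_lt (max_lt (by linarith) (by linarith))

/-- Claim 4.3 with a nontrivial Weyl reflection. -/
theorem claim_4_3_weyl {n : ℕ} (hn : 1 ≤ n)
    (β : Fin n → Fin 2 → ℝ)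
    (hβint : ∀ i, ∃ b : Fin 2 → ℤ, β i = fun k => ((b k : ℝ)))
    (hspan : Submodule.span ℝ (Set.range β) = ⊤)
    (lam0 : Fin 2 → ℝ) (hlam0 : ∀ i, pairR lam0 (β i) < 0)
    (lam' : Fin 2 → ℝ) (hlam'ne : lam' ≠ 0)
    (hlam'ω : pairR lam' (∑ i, β i) = 0)
    (hlam'int : ∀ c : Fin 2 → ℤ, ∃ z : ℤ, pairR lam' (fun k => ((c k : ℝ))) = (z : ℝ))
    (ρ : Fin 2 → ℝ)
    (h2ρ : ∃ r : Fin 2 → ℤ, (2 : ℝ) • ρ = fun k => ((r k : ℝ)))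
    (hρ0 : pairR lam0 ρ = 0) (hρ' : pairR lam' ρ = -1)
    (w0 : (Fin 2 → ℝ) →ₗ[ℝ] (Fin 2 → ℝ))
    (hw0invol : ∀ ν, w0 (w0 ν) = ν)
    (hw0lam0 : ∀ ν, pairR lam0 (w0 ν) = pairR lam0 ν)
    (hw0lam' : ∀ ν, pairR lam' (w0 ν) = -pairR lam' ν)
    (θ : Fin 2 → ℝ) (hθ : ∃ c : ℝ, θ = c • (∑ i, β i))
    (χ : Fin 2 → ℝ) (hχM : ∃ c : Fin 2 → ℤ, χ = fun k => ((c k : ℝ)))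
    (hχ1 : pairR lam' (χ - θ) ≤ 0)
    (hχ2 : 1 / 2 ≤ rvalRho β lam' ρ θ χ)
    (hχ3 : Qval β lam0 lam' < pairR lam0 (χ - θ))
    (hχ4 : pairR lam0 (χ - θ) ≤ (-∑ i, pairR lam0 (β i)) / 2)
    (S : Finset (Fin n)) (hS : S.Nonempty)
    (hSpos : ∀ i ∈ S, 0 < pairR lam' (β i))
    (μ : Fin 2 → ℝ) (hμ : μ = χ + ∑ i ∈ S, β i)
    (hμplus : pairR lam' (μ + ρ) ≠ 0) :
    |pairR lam0 (muPlus lam' ρ w0 μ - θ)| ≤ (-∑ i, pairR lam0 (β i)) / 2 ∧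
      rvalRho β lam' ρ θ (muPlus lam' ρ w0 μ) ≤ rvalRho β lam' ρ θ χ ∧
      (1 / 2 < rvalRho β lam' ρ θ χ →
        rvalRho β lam' ρ θ (muPlus lam' ρ w0 μ) < rvalRho β lam' ρ θ χ) :=
  claim_4_3_weyl_general β hβint lam0 hlam0 lam' hlam'ω hlam'int ρ hρ' w0 hw0lam0 hw0lam' θ hθ χ hχM
    hχ1 hχ2 hχ3 hχ4 S hS hSpos μ hμ hμplus
end
end

section
/- Numerical core of Claim 5.3, Case 2 (nef-Fano reduction off the boundary set Ψ_R): Let R > 1 and let χ ∈ M_ℝ satisfy ⟨λ', χ − θ⟩ = R·D/2 and −Q ≤ ⟨λ_0, χ − θ⟩ ≤ η_0/2. Let S ⊆ {1, …, n} be nonempty with ⟨λ', β_i⟩ < 0 for all i ∈ S, and set μ := χ + ∑_{i∈S} β_i. Then |⟨λ_0, μ − θ⟩| ≤ η_0/2 and −R·D/2 < (R/2 − 1)·D ≤ ⟨λ', μ − θ⟩ < R·D/2; in particular μ − θ lies in the enlarged cylinder ∇̄^{R'} for some R' < R. -/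
noncomputable section

/-! Adding `∑_{i∈S} β_i` to `χ` lowers `⟨λ', ·⟩` by a positive amount of at most `D`, since the
`⟨λ', β_i⟩`, `i ∈ S`, are among the nonpositive terms summing to `−D`; so `μ − θ` lands in the slab
`[(R/2 − 1)D, RD/2)`. It lowers `⟨λ_0, ·⟩` by at most `−∑_{⟨λ', β_i⟩ < 0} ⟨λ_0, β_i⟩`, which is
exactly the margin by which `−Q` lies above `−η_0/2`. The one non-numerical input is `D > 0`:
otherwise the `⟨λ', β_i⟩` are nonnegative and sum to `⟨λ', ω*⟩ = 0`, hence all vanish, and since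
the `β_i` span, `λ'` would be `0`. -/

theorem pairR_eq_dotProduct (l x : Fin 2 → ℝ) : pairR l x = l ⬝ᵥ x := rfl

theorem sum_le_sum_of_subset_of_nonpos {ι : Type*} [DecidableEq ι] {s t : Finset ι} {f : ι → ℝ}
    (h : s ⊆ t) (hf : ∀ i ∈ t, i ∉ s → f i ≤ 0) : ∑ i ∈ t, f i ≤ ∑ i ∈ s, f i := by
  rw [← Finset.sum_sdiff h]
  exact add_le_of_nonpos_left (Finset.sum_nonpos fun i hi => hf i
    (Finset.mem_sdiff.1 hi).1 (Finset.mem_sdiff.1 hi).2)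

theorem exists_lt_abs_le_mul_div_two {v R D : ℝ} (hD : 0 < D) (hv : |v| < R * D / 2) :
    ∃ R' < R, |v| ≤ R' * D / 2 :=
  ⟨2 * |v| / D, by rw [div_lt_iff₀ hD]; linarith, by field_simp; rfl⟩

section

variable {ι : Type*} (β : ι → Fin 2 → ℝ)

theorem eq_zero_of_pairR_eq_zero_of_span_eq_top (hspan : Submodule.span ℝ (Set.range β) = ⊤)
    {l : Fin 2 → ℝ} (hl : ∀ i, pairR l (β i) = 0) : l = 0 := by
  have hmap : dotProductBilin ℝ ℝ l = 0 := LinearMap.ext_on_range hspan hl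
  exact dotProduct_self_eq_zero.1 (LinearMap.congr_fun hmap l)

theorem exists_pairR_neg [Fintype ι] (hspan : Submodule.span ℝ (Set.range β) = ⊤)
    {l : Fin 2 → ℝ} (hl : l ≠ 0) (hsum : pairR l (∑ i, β i) = 0) : ∃ i, pairR l (β i) < 0 := by
  by_contra! hnonneg
  rw [pairR_eq_dotProduct, dotProduct_sum] at hsum
  exact hl <| eq_zero_of_pairR_eq_zero_of_span_eq_top β hspan fun i =>
    (Finset.sum_eq_zero_iff_of_nonneg fun i _ => hnonneg i).1 hsum i (Finset.mem_univ i)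

end

section

variable {n : ℕ} (β : Fin n → Fin 2 → ℝ)

theorem Dval_pos (hspan : Submodule.span ℝ (Set.range β) = ⊤) {lam' : Fin 2 → ℝ}
    (hlam'ne : lam' ≠ 0) (hlam'ω : pairR lam' (∑ i, β i) = 0) : 0 < Dval β lam' := by
  obtain ⟨i, hi⟩ := exists_pairR_neg β hspan hlam'ne hlam'ω
  have hle : ∑ j ∈ Finset.univ.filter (fun j => pairR lam' (β j) ≤ 0), pairR lam' (β j)
      ≤ pairR lam' (β i) := by
    simpa using sum_le_sum_of_subset_of_nonpos (f := fun j => pairR lam' (β j))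
      (Finset.singleton_subset_iff.2 (Finset.mem_filter.2 ⟨Finset.mem_univ i, hi.le⟩))
      fun j hj _ => (Finset.mem_filter.1 hj).2
  rw [Dval]
  linarith

theorem neg_Dval_le_sum_pairR {lam' : Fin 2 → ℝ} {S : Finset (Fin n)}
    (hS : ∀ i ∈ S, pairR lam' (β i) ≤ 0) : -Dval β lam' ≤ ∑ i ∈ S, pairR lam' (β i) := by
  rw [Dval, neg_neg]
  exact sum_le_sum_of_subset_of_nonpos
    (fun i hi => Finset.mem_filter.2 ⟨Finset.mem_univ i, hS i hi⟩) fun i hi _ => (Finset.mem_filter.1 hi).2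

theorem abs_add_sum_pairR_le {lam0 lam' : Fin 2 → ℝ} (hlam0 : ∀ i, pairR lam0 (β i) ≤ 0)
    {S : Finset (Fin n)} (hSneg : ∀ i ∈ S, pairR lam' (β i) < 0) {a : ℝ}
    (ha₁ : -Qval β lam0 lam' ≤ a) (ha₂ : a ≤ (-∑ i, pairR lam0 (β i)) / 2) :
    |a + ∑ i ∈ S, pairR lam0 (β i)| ≤ (-∑ i, pairR lam0 (β i)) / 2 := by
  have hle : ∑ i ∈ Finset.univ.filter (fun i => pairR lam' (β i) < 0), pairR lam0 (β i)
      ≤ ∑ i ∈ S, pairR lam0 (β i) :=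
    sum_le_sum_of_subset_of_nonpos
      (fun i hi => Finset.mem_filter.2 ⟨Finset.mem_univ i, hSneg i hi⟩) fun i _ _ => hlam0 i
  have hnonpos : ∑ i ∈ S, pairR lam0 (β i) ≤ 0 := Finset.sum_nonpos fun i _ => hlam0 i
  rw [Qval] at ha₁
  rw [abs_le]
  constructor <;> linarith

end

theorem claim_5_3_case_2_general {n : ℕ}
    (β : Fin n → Fin 2 → ℝ)
    (hspan : Submodule.span ℝ (Set.range β) = ⊤)
    (lam0 : Fin 2 → ℝ) (hlam0 : ∀ i, pairR lam0 (β i) < 0)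
    (lam' : Fin 2 → ℝ) (hlam'ne : lam' ≠ 0)
    (hlam'ω : pairR lam' (∑ i, β i) = 0)
    (θ : Fin 2 → ℝ)
    (R : ℝ) (hR : 1 < R)
    (χ : Fin 2 → ℝ)
    (hχ1 : pairR lam' (χ - θ) = R * Dval β lam' / 2)
    (hχ2 : -Qval β lam0 lam' ≤ pairR lam0 (χ - θ))
    (hχ3 : pairR lam0 (χ - θ) ≤ (-∑ i, pairR lam0 (β i)) / 2)
    (S : Finset (Fin n)) (hS : S.Nonempty)
    (hSneg : ∀ i ∈ S, pairR lam' (β i) < 0)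
    (μ : Fin 2 → ℝ) (hμ : μ = χ + ∑ i ∈ S, β i) :
    |pairR lam0 (μ - θ)| ≤ (-∑ i, pairR lam0 (β i)) / 2 ∧
      -(R * Dval β lam' / 2) < (R / 2 - 1) * Dval β lam' ∧
      (R / 2 - 1) * Dval β lam' ≤ pairR lam' (μ - θ) ∧
      pairR lam' (μ - θ) < R * Dval β lam' / 2 ∧
      ∃ R' : ℝ, R' < R ∧ |pairR lam' (μ - θ)| ≤ R' * Dval β lam' / 2 := by
  have hpair : ∀ l, pairR l (μ - θ) = pairR l (χ - θ) + ∑ i ∈ S, pairR l (β i) := fun l => by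
    rw [show μ - θ = (χ - θ) + ∑ i ∈ S, β i by rw [hμ]; abel, pairR_eq_dotProduct,
      dotProduct_add, dotProduct_sum]
    rfl
  have hD := Dval_pos β hspan hlam'ne hlam'ω
  have hdrop_ge := neg_Dval_le_sum_pairR β fun i hi => (hSneg i hi).le
  have hdrop_neg : ∑ i ∈ S, pairR lam' (β i) < 0 := Finset.sum_neg hSneg hS
  rw [hpair lam0, hpair lam', hχ1]
  refine ⟨abs_add_sum_pairR_le β (fun i => (hlam0 i).le) hSneg hχ2 hχ3, by nlinarith,
    by linarith, by linarith,
    exists_lt_abs_le_mul_div_two hD (abs_lt.2 ⟨by nlinarith, by linarith⟩)⟩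

/-- numerical core of Claim 5.3, Case 2. -/
theorem claim_5_3_case_2 {n : ℕ} (hn : 1 ≤ n)
    (β : Fin n → Fin 2 → ℝ)
    (hβint : ∀ i, ∃ b : Fin 2 → ℤ, β i = fun k => ((b k : ℝ)))
    (hspan : Submodule.span ℝ (Set.range β) = ⊤)
    (lam0 : Fin 2 → ℝ) (hlam0 : ∀ i, pairR lam0 (β i) < 0)
    (lam' : Fin 2 → ℝ) (hlam'ne : lam' ≠ 0)
    (hlam'ω : pairR lam' (∑ i, β i) = 0)
    (θ : Fin 2 → ℝ)
    (R : ℝ) (hR : 1 < R)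
    (χ : Fin 2 → ℝ)
    (hχ1 : pairR lam' (χ - θ) = R * Dval β lam' / 2)
    (hχ2 : -Qval β lam0 lam' ≤ pairR lam0 (χ - θ))
    (hχ3 : pairR lam0 (χ - θ) ≤ (-∑ i, pairR lam0 (β i)) / 2)
    (S : Finset (Fin n)) (hS : S.Nonempty)
    (hSneg : ∀ i ∈ S, pairR lam' (β i) < 0)
    (μ : Fin 2 → ℝ) (hμ : μ = χ + ∑ i ∈ S, β i) :
    |pairR lam0 (μ - θ)| ≤ (-∑ i, pairR lam0 (β i)) / 2 ∧
      -(R * Dval β lam' / 2) < (R / 2 - 1) * Dval β lam' ∧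
      (R / 2 - 1) * Dval β lam' ≤ pairR lam' (μ - θ) ∧
      pairR lam' (μ - θ) < R * Dval β lam' / 2 ∧
      ∃ R' : ℝ, R' < R ∧ |pairR lam' (μ - θ)| ≤ R' * Dval β lam' / 2 :=
  claim_5_3_case_2_general β hspan lam0 hlam0 lam' hlam'ne hlam'ω θ R hR χ hχ1 hχ2 hχ3 S hS hSneg μ
    hμ
end
end
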